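/- arXiv:2110.06270 — 6 statements merged into one kernel-verified Lean document; each statement's English description precedes it below -/
import Mathlib

section
/- Suppose the encryption scheme is homomorphic with respect to the integer map ḡ, i.e., there is a map 𝐠 : C^m × D^m → C with DecZ(𝐠(c₁,…,c_m,d₁,…,d_m)) = ḡ(DecZ(c₁),…,DecZ(c_m),DecV(d₁),…,DecV(d_m)) for all cᵢ ∈ C, dᵢ ∈ D. Let ȳ : ℕ → ℤ^p be any integer input sequence, let ū(0),…,ū(m−1) ∈ ℤ be initial values, and define for every t ≥ m the quantized controller u_q(t) = L·ḡ(ū(t−1),…,ū(t−m),ȳ(t−1),…,ȳ(t−m)) and ū(t) = ⌈u_q(t)/r⌋, and the encrypted controller 𝐮(t) = 𝐠(EncZ(ū(t−1)),…,EncZ(ū(t−m)),EncV(ȳ(t−1)),…,EncV(ȳ(t−m))). Then the encrypted controller reproduces the quantized controller for the infinite time horizon: L·DecZ(𝐮(t)) = u_q(t) for all t ≥ m. -/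
/-- If the encryption scheme is homomorphic with respect to the
integer map `gbar`, then the encrypted controller reproduces the quantized
controller for the infinite time horizon: `L * DecZ (𝐮 t) = u_q t` for all `t ≥ m`. -/
theorem encrypted_controller_reproduces_quantized_controller
    (m p : ℕ) (hm : 1 ≤ m) (hp : 1 ≤ p)
    (r L : ℝ) (hr : 0 < r) (hL : 0 < L)
    (gbar : (Fin m → ℤ) → (Fin m → Fin p → ℤ) → ℤ)
    (C D : Type)
    (EncZ : ℤ → C) (DecZ : C → ℤ)
    (EncV : (Fin p → ℤ) → D) (DecV : D → Fin p → ℤ)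
    (hEncZ : ∀ a : ℤ, DecZ (EncZ a) = a)
    (hEncV : ∀ v : Fin p → ℤ, DecV (EncV v) = v)
    (G : (Fin m → C) → (Fin m → D) → C)
    (hhom : ∀ (c : Fin m → C) (d : Fin m → D),
      DecZ (G c d) = gbar (fun i => DecZ (c i)) (fun i => DecV (d i)))
    (ybar : ℕ → Fin p → ℤ)
    (ubar : ℕ → ℤ) (uq : ℕ → ℝ) (U : ℕ → C)
    (huq : ∀ t, m ≤ t →
      uq t = L * ((gbar (fun i => ubar (t - 1 - (i : ℕ)))
        (fun i => ybar (t - 1 - (i : ℕ)))) : ℝ))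
    (hubar : ∀ t, m ≤ t → ubar t = round (uq t / r))
    (hU : ∀ t, m ≤ t →
      U t = G (fun i => EncZ (ubar (t - 1 - (i : ℕ))))
        (fun i => EncV (ybar (t - 1 - (i : ℕ))))) :
    ∀ t, m ≤ t → L * ((DecZ (U t) : ℤ) : ℝ) = uq t := by
  intro t ht
  rw [hU t ht, hhom, huq t ht]
  simp [hEncZ, hEncV]
end

section
/- There exists a function G : ℝ^{n'} × (ℝ^p)^{n'} → ℝ, depending only on g₁,…,g_{n'}, such that every trajectory (z, y) of the observable canonical form satisfies u(t) = G(u(t−1),…,u(t−n'), y(t−1),…,y(t−n')) for all t ≥ n', where u(t) := z_{n'}(t). In particular, the output of the system can be represented as a function of its previous n' outputs and previous n' inputs. -/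
/-- Forward simulation of the observable canonical form from recorded
outputs `U` and inputs `Y`. -/
def simW (n p : ℕ) (g : Fin (n + 1) → (Fin (n + 1) → ℝ) → (Fin p → ℝ) → ℝ)
    (U : Fin (n + 1) → ℝ) (Y : Fin (n + 1) → Fin p → ℝ) : ℕ → Fin (n + 1) → ℝ
  | 0 => fun _ => U (Fin.last n)
  | s + 1 => fun i =>
      if s < n ∧ i = Fin.last n then U ⟨n - s - 1, by omega⟩
      else g i (simW n p g U Y s) (Y ⟨n - s, by omega⟩)

/-- For a system in observable canonical form with state dimension
`n' = n + 1 ≥ 1`, there exists a function `G` (depending only on `g₁,…,g_{n'}`)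
such that along every trajectory the output `u(t) := z_{n'}(t)` satisfies
`u(t) = G(u(t−1),…,u(t−n'), y(t−1),…,y(t−n'))` for all `t ≥ n'`. -/
theorem observable_canonical_form_output_representation
    (n p : ℕ) (hp : 1 ≤ p)
    (g : Fin (n + 1) → (Fin (n + 1) → ℝ) → (Fin p → ℝ) → ℝ)
    (hdep : ∀ (i : Fin (n + 1)) (z z' : Fin (n + 1) → ℝ) (y : Fin p → ℝ),
      (∀ j : Fin (n + 1), j < i → z j = z' j) →
      z (Fin.last n) = z' (Fin.last n) → g i z y = g i z' y) :
    ∃ G : (Fin (n + 1) → ℝ) → (Fin (n + 1) → Fin p → ℝ) → ℝ,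
      ∀ (z : ℕ → Fin (n + 1) → ℝ) (y : ℕ → Fin p → ℝ),
        (∀ (t : ℕ) (i : Fin (n + 1)), z (t + 1) i = g i (z t) (y t)) →
        ∀ t, n + 1 ≤ t →
          z t (Fin.last n) =
            G (fun i => z (t - 1 - (i : ℕ)) (Fin.last n))
              (fun i => y (t - 1 - (i : ℕ))) := by
  refine ⟨fun U Y => simW n p g U Y (n + 1) (Fin.last n), ?_⟩
  intro z y h t ht
  set U : Fin (n + 1) → ℝ := fun i => z (t - 1 - (i : ℕ)) (Fin.last n) with hU
  set Y : Fin (n + 1) → Fin p → ℝ := fun i => y (t - 1 - (i : ℕ)) with hY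
  have key : ∀ s, s ≤ n + 1 → ∀ i : Fin (n + 1),
      ((i : ℕ) < s ∨ ((i : ℕ) = n ∧ s ≤ n)) →
      simW n p g U Y s i = z (t - (n + 1) + s) i := by
    intro s
    induction s with
    | zero =>
      intro _ i hi
      have hi' : (i : ℕ) = n := by omega
      have : i = Fin.last n := Fin.ext hi'
      subst this
      show U (Fin.last n) = _
      have harg : t - 1 - ((Fin.last n : Fin (n + 1)) : ℕ) = t - (n + 1) + 0 := by
        simp [Fin.last]; omega
      show z (t - 1 - ((Fin.last n : Fin (n + 1)) : ℕ)) (Fin.last n) = _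
      rw [harg]
    | succ s ih =>
      intro hs i hi
      have hs' : s ≤ n := by omega
      by_cases hc : s < n ∧ i = Fin.last n
      · have : simW n p g U Y (s + 1) i = U ⟨n - s - 1, by omega⟩ := by
          simp [simW, hc]
        rw [this]
        show z (t - 1 - (n - s - 1)) (Fin.last n) = _
        have harg : t - 1 - (n - s - 1) = t - (n + 1) + (s + 1) := by omega
        rw [harg, hc.2]
      · have hi' : (i : ℕ) < s + 1 := by
          rcases hi with hi | ⟨hi, hle⟩
          · exact hi
          · exact absurd ⟨by omega, Fin.ext hi⟩ hc
        have hstep : simW n p g U Y (s + 1) i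
            = g i (simW n p g U Y s) (Y ⟨n - s, by omega⟩) := by
          simp [simW, hc]
        rw [hstep]
        have harg2 : t - 1 - (n - s) = t - (n + 1) + s := by omega
        have hYeq : Y ⟨n - s, by omega⟩ = y (t - (n + 1) + s) := by
          show y (t - 1 - (n - s)) = _
          rw [harg2]
        have hg : g i (simW n p g U Y s) (Y ⟨n - s, by omega⟩)
            = g i (z (t - (n + 1) + s)) (y (t - (n + 1) + s)) := by
          rw [hYeq]
          apply hdep
          · intro j hj
            exact ih (by omega) j (Or.inl (by omega))
          · exact ih (by omega) (Fin.last n) (Or.inr ⟨rfl, hs'⟩)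
        rw [hg, ← h]
        rfl
  have hk := key (n + 1) le_rfl (Fin.last n) (Or.inl (by simp [Fin.last]))
  show z t (Fin.last n) = simW n p g U Y (n + 1) (Fin.last n)
  rw [hk]
  congr 1
  omega
end

section
/- For every i ∈ {1,…,n'} there exists a function φᵢ : ℝ^i × (ℝ^p)^i → ℝ, depending only on g₁,…,g_{n'}, such that every trajectory (z, y) of the observable canonical form satisfies zᵢ(t) = φᵢ(u(t−1),…,u(t−i), y(t−1),…,y(t−i)) for all t ≥ i, where u(t) := z_{n'}(t). That is, the i-th state coordinate at time t is determined by the previous i outputs and previous i inputs. -/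
/-- Uniqueness: the `m`-th state coordinate at time `t` is determined by the
previous `m+1` outputs and inputs. -/
lemma ocf_uniq
    (n p : ℕ)
    (g : Fin (n + 1) → (Fin (n + 1) → ℝ) → (Fin p → ℝ) → ℝ)
    (hdep : ∀ (i : Fin (n + 1)) (z z' : Fin (n + 1) → ℝ) (y : Fin p → ℝ),
      (∀ j : Fin (n + 1), j < i → z j = z' j) →
      z (Fin.last n) = z' (Fin.last n) → g i z y = g i z' y) :
    ∀ m : ℕ, ∀ (hm : m < n + 1)
      (z : ℕ → Fin (n + 1) → ℝ) (y : ℕ → Fin p → ℝ)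
      (z' : ℕ → Fin (n + 1) → ℝ) (y' : ℕ → Fin p → ℝ),
      (∀ (t : ℕ) (j : Fin (n + 1)), z (t + 1) j = g j (z t) (y t)) →
      (∀ (t : ℕ) (j : Fin (n + 1)), z' (t + 1) j = g j (z' t) (y' t)) →
      ∀ t t' : ℕ, m + 1 ≤ t → m + 1 ≤ t' →
      (∀ k : ℕ, k ≤ m →
        z (t - 1 - k) (Fin.last n) = z' (t' - 1 - k) (Fin.last n) ∧
        y (t - 1 - k) = y' (t' - 1 - k)) →
      z t ⟨m, hm⟩ = z' t' ⟨m, hm⟩ := by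
  intro m
  induction m using Nat.strong_induction_on with
  | _ m IH =>
    intro hm z y z' y' hz hz' t t' ht ht' hhist
    have h1 : t = (t - 1) + 1 := by omega
    have h2 : t' = (t' - 1) + 1 := by omega
    have e1 : z t ⟨m, hm⟩ = g ⟨m, hm⟩ (z (t - 1)) (y (t - 1)) := by
      rw [h1]; exact hz (t - 1) _
    have e2 : z' t' ⟨m, hm⟩ = g ⟨m, hm⟩ (z' (t' - 1)) (y' (t' - 1)) := by
      rw [h2]; exact hz' (t' - 1) _
    have hy0 : y (t - 1) = y' (t' - 1) := by
      have := (hhist 0 (Nat.zero_le m)).2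
      simpa using this
    rw [e1, e2, hy0]
    apply hdep
    · intro j hj
      have hjm : (j : ℕ) < m := hj
      have hji : z (t - 1) ⟨(j : ℕ), j.isLt⟩ = z' (t' - 1) ⟨(j : ℕ), j.isLt⟩ := by
        apply IH (j : ℕ) hjm j.isLt z y z' y' hz hz' (t - 1) (t' - 1)
          (by omega) (by omega)
        intro k hk
        have h3 : t - 1 - 1 - k = t - 1 - (k + 1) := by omega
        have h4 : t' - 1 - 1 - k = t' - 1 - (k + 1) := by omega
        rw [h3, h4]
        exact hhist (k + 1) (by omega)
      simpa using hji
    · have := (hhist 0 (Nat.zero_le m)).1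
      simpa using this

/-- For a system in observable canonical form with state dimension
`n' = n + 1 ≥ 1`, for each state coordinate `i` (0-based, so `i` corresponds to
the `(i+1)`-th coordinate) there exists a function `φᵢ` (depending only on
`g₁,…,g_{n'}`) such that along every trajectory,
`zᵢ(t) = φᵢ(u(t−1),…,u(t−(i+1)), y(t−1),…,y(t−(i+1)))` for all `t ≥ i + 1`,
where `u(t) := z_{n'}(t)` is the output. -/
theorem observable_canonical_form_state_representation
    (n p : ℕ) (hp : 1 ≤ p)
    (g : Fin (n + 1) → (Fin (n + 1) → ℝ) → (Fin p → ℝ) → ℝ)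
    (hdep : ∀ (i : Fin (n + 1)) (z z' : Fin (n + 1) → ℝ) (y : Fin p → ℝ),
      (∀ j : Fin (n + 1), j < i → z j = z' j) →
      z (Fin.last n) = z' (Fin.last n) → g i z y = g i z' y) :
    ∀ i : Fin (n + 1),
      ∃ φ : (Fin ((i : ℕ) + 1) → ℝ) → (Fin ((i : ℕ) + 1) → Fin p → ℝ) → ℝ,
        ∀ (z : ℕ → Fin (n + 1) → ℝ) (y : ℕ → Fin p → ℝ),
          (∀ (t : ℕ) (j : Fin (n + 1)), z (t + 1) j = g j (z t) (y t)) →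
          ∀ t, (i : ℕ) + 1 ≤ t →
            z t i =
              φ (fun k => z (t - 1 - (k : ℕ)) (Fin.last n))
                (fun k => y (t - 1 - (k : ℕ))) := by
  intro i
  classical
  set m : ℕ := (i : ℕ) with hm
  refine ⟨fun us ys =>
    if h : ∃ w : (ℕ → Fin (n + 1) → ℝ) × (ℕ → Fin p → ℝ) × ℕ,
        (∀ (t : ℕ) (j : Fin (n + 1)), w.1 (t + 1) j = g j (w.1 t) (w.2.1 t)) ∧
        m + 1 ≤ w.2.2 ∧
        (∀ k : Fin (m + 1),
          w.1 (w.2.2 - 1 - (k : ℕ)) (Fin.last n) = us k ∧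
          w.2.1 (w.2.2 - 1 - (k : ℕ)) = ys k)
    then h.choose.1 h.choose.2.2 i else 0, ?_⟩
  intro z y hz t ht
  have hex : ∃ w : (ℕ → Fin (n + 1) → ℝ) × (ℕ → Fin p → ℝ) × ℕ,
      (∀ (t : ℕ) (j : Fin (n + 1)), w.1 (t + 1) j = g j (w.1 t) (w.2.1 t)) ∧
      m + 1 ≤ w.2.2 ∧
      (∀ k : Fin (m + 1),
        w.1 (w.2.2 - 1 - (k : ℕ)) (Fin.last n)
          = (fun k : Fin (m + 1) => z (t - 1 - (k : ℕ)) (Fin.last n)) k ∧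
        w.2.1 (w.2.2 - 1 - (k : ℕ))
          = (fun k : Fin (m + 1) => y (t - 1 - (k : ℕ))) k) :=
    ⟨(z, y, t), hz, ht, fun k => ⟨rfl, rfl⟩⟩
  beta_reduce
  rw [dif_pos hex]
  obtain ⟨hw1, hw2, hw3⟩ := hex.choose_spec
  have := ocf_uniq n p g hdep m i.isLt z y hex.choose.1 hex.choose.2.1 hz hw1
    t hex.choose.2.2 ht hw2 ?_
  · have hi : (⟨m, i.isLt⟩ : Fin (n + 1)) = i := by simp [hm]
    rw [hi] at this
    exact this
  · intro k hk
    have := hw3 ⟨k, by omega⟩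
    exact ⟨(this.1).symm, (this.2).symm⟩
end

section
/- Let P be a polynomial in k variables with real coefficients, let M > 0 and ε > 0. Then there exists r₀ > 0 such that for every r with 0 < r < r₀ there exist a scale factor L > 0 and a polynomial Q in k variables with integer coefficients such that |L·Q(⌈x₁/r⌋,…,⌈x_k/r⌋) − P(x₁,…,x_k)| < ε for every x ∈ ℝ^k with |xᵢ| ≤ M for all i. That is, every real polynomial can be approximated uniformly on bounded sets, to arbitrary accuracy, by a scaled integer-coefficient polynomial evaluated at quantized (rounded) inputs. -/
set_option maxHeartbeats 1600000 in
/-- Every real polynomial in `k` variables can be approximated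
uniformly on the box `{x : |xᵢ| ≤ M}`, to arbitrary accuracy `ε`, by a scaled
integer-coefficient polynomial evaluated at quantized (rounded) inputs
`⌈xᵢ/r⌋`, for every sufficiently small quantization step `r`. -/
theorem polynomial_quantized_approximation
    (k : ℕ) (hk : 1 ≤ k)
    (P : MvPolynomial (Fin k) ℝ) (M ε : ℝ) (hM : 0 < M) (hε : 0 < ε) :
    ∃ r₀ : ℝ, 0 < r₀ ∧
      ∀ r : ℝ, 0 < r → r < r₀ →
        ∃ L : ℝ, 0 < L ∧
          ∃ Q : MvPolynomial (Fin k) ℤ,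
            ∀ x : Fin k → ℝ, (∀ i, |x i| ≤ M) →
              |L * ((MvPolynomial.eval (fun i => round (x i / r)) Q : ℤ) : ℝ) -
                  MvPolynomial.eval x P| < ε := by
  classical
  set f : (Fin k → ℝ) → ℝ := fun x => MvPolynomial.eval x P with hf
  have hcont : Continuous f := MvPolynomial.continuous_eval P
  have hK : IsCompact (Metric.closedBall (0 : Fin k → ℝ) (M + 1)) :=
    isCompact_closedBall _ _
  have hUC : UniformContinuousOn f (Metric.closedBall (0 : Fin k → ℝ) (M + 1)) :=
    hK.uniformContinuousOn_of_continuous hcont.continuousOn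
  rw [Metric.uniformContinuousOn_iff] at hUC
  obtain ⟨δ, hδ, hδ'⟩ := hUC (ε / 2) (by positivity)
  refine ⟨min δ 1, by positivity, ?_⟩
  intro r hr hrlt
  have hr1 : r ≤ 1 := (lt_of_lt_of_le hrlt (min_le_right _ _)).le
  have hrδ : r < δ := lt_of_lt_of_le hrlt (min_le_left _ _)
  set D := P.totalDegree with hD
  set B : ℝ := (M + 1) / r with hB
  have hBpos : 0 < B := by positivity
  have hB1 : 1 ≤ B := by
    rw [hB, le_div_iff₀ hr]
    linarith
  have hBD : 0 < B ^ D := by positivity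
  set S := P.support with hS
  set c : ℝ := (S.card : ℝ) with hc
  have hc0 : 0 ≤ c := Nat.cast_nonneg _
  set L : ℝ := ε / (2 * (c + 1) * B ^ D) with hLdef
  have hL : 0 < L := by positivity
  set w : ((Fin k) →₀ ℕ) → ℕ := fun m => ∑ i, m i with hw
  set a : ((Fin k) →₀ ℕ) → ℤ :=
    fun m => round (MvPolynomial.coeff m P * r ^ (w m) / L) with ha
  set Q : MvPolynomial (Fin k) ℤ := ∑ m ∈ S, MvPolynomial.monomial m (a m) with hQ
  refine ⟨L, hL, Q, ?_⟩
  intro x hx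
  set n : Fin k → ℤ := fun i => round (x i / r) with hn
  set y : Fin k → ℝ := fun i => r * (n i) with hy
  have hxy : ∀ i, |x i - y i| ≤ r / 2 := by
    intro i
    have := abs_sub_round (x i / r)
    have h1 : x i - y i = r * (x i / r - round (x i / r)) := by
      field_simp [hy, hn]
      rfl
    rw [h1, abs_mul, abs_of_pos hr]
    calc r * |x i / r - round (x i / r)| ≤ r * (1 / 2) := by
          exact mul_le_mul_of_nonneg_left this hr.le
      _ = r / 2 := by ring
  have hni : ∀ i, |(n i : ℝ)| ≤ B := by
    intro i
    have h2 := abs_sub_round (x i / r)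
    have h3 : |(n i : ℝ)| ≤ |x i / r| + 1 / 2 := by
      have : (n i : ℝ) = x i / r - (x i / r - round (x i / r)) := by simp [hn]
      rw [this]
      calc |x i / r - (x i / r - round (x i / r))| ≤ |x i / r| + |x i / r - round (x i / r)| :=
            abs_sub _ _
        _ ≤ |x i / r| + 1 / 2 := by linarith
    have h4 : |x i / r| ≤ M / r := by
      rw [abs_div, abs_of_pos hr]
      exact div_le_div_of_nonneg_right (hx i) hr.le
    have h5 : (1 : ℝ) / 2 ≤ 1 / r := by
      apply div_le_div_of_nonneg_left <;> linarith
    calc |(n i : ℝ)| ≤ M / r + 1 / 2 := by linarith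
      _ ≤ M / r + 1 / r := by linarith
      _ = B := by rw [hB]; ring
  -- membership in the ball
  have hxK : x ∈ Metric.closedBall (0 : Fin k → ℝ) (M + 1) := by
    rw [Metric.mem_closedBall, dist_pi_le_iff (by linarith)]
    intro i
    rw [Real.dist_eq]
    simpa using (hx i).trans (by linarith)
  have hyK : y ∈ Metric.closedBall (0 : Fin k → ℝ) (M + 1) := by
    rw [Metric.mem_closedBall, dist_pi_le_iff (by linarith)]
    intro i
    rw [Real.dist_eq]
    have := hxy i
    have := hx i
    have : |y i| ≤ M + r / 2 := by
      calc |y i| = |x i - (x i - y i)| := by ring_nf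
        _ ≤ |x i| + |x i - y i| := abs_sub _ _
        _ ≤ M + r / 2 := add_le_add (hx i) (hxy i)
    simpa using this.trans (by linarith)
  have hdist : dist x y < δ := by
    rw [dist_pi_lt_iff hδ]
    intro i
    rw [Real.dist_eq]
    calc |x i - y i| ≤ r / 2 := hxy i
      _ < δ := by linarith
  have hpart1 : |f y - f x| < ε / 2 := by
    have := hδ' y hyK x hxK (by rwa [dist_comm] at hdist)
    rwa [Real.dist_eq] at this
  -- part 2 : algebraic estimate
  have hwD : ∀ m ∈ S, w m ≤ D := by
    intro m hm
    have h1 : m.sum (fun _ e => e) ≤ D := MvPolynomial.le_totalDegree hm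
    have h2 : m.sum (fun _ e => e) = w m := Finsupp.sum_fintype _ _ (fun _ => rfl)
    omega
  have hevalQ : (L * ((MvPolynomial.eval n Q : ℤ) : ℝ)) =
      ∑ m ∈ S, L * (a m : ℝ) * ∏ i, ((n i : ℝ)) ^ m i := by
    rw [hQ]
    rw [map_sum]
    push_cast
    rw [Finset.mul_sum]
    refine Finset.sum_congr rfl fun m hm => ?_
    rw [MvPolynomial.eval_monomial]
    rw [Finsupp.prod_fintype _ _ (fun _ => pow_zero _)]
    push_cast
    ring
  have hevalP : f y = ∑ m ∈ S, (MvPolynomial.coeff m P * r ^ (w m)) * ∏ i, ((n i : ℝ)) ^ m i := by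
    show MvPolynomial.eval y P = _
    rw [MvPolynomial.eval_eq']
    refine Finset.sum_congr rfl fun m hm => ?_
    have : ∏ i, y i ^ m i = (∏ i, r ^ m i) * ∏ i, ((n i : ℝ)) ^ m i := by
      rw [← Finset.prod_mul_distrib]
      refine Finset.prod_congr rfl fun i _ => ?_
      rw [hy, mul_pow]
    rw [this, Finset.prod_pow_eq_pow_sum]
    ring
  have hterm : ∀ m ∈ S,
      |L * (a m : ℝ) - MvPolynomial.coeff m P * r ^ (w m)| * ∏ i, |(n i : ℝ)| ^ m i
        ≤ L / 2 * B ^ D := by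
    intro m hm
    have h1 : |L * (a m : ℝ) - MvPolynomial.coeff m P * r ^ (w m)| ≤ L / 2 := by
      have h2 := abs_sub_round (MvPolynomial.coeff m P * r ^ (w m) / L)
      have h3 : L * (a m : ℝ) - MvPolynomial.coeff m P * r ^ (w m) =
          -(L * (MvPolynomial.coeff m P * r ^ (w m) / L - (a m : ℝ))) := by
        field_simp [ha]
        ring
      rw [h3, abs_neg, abs_mul, abs_of_pos hL]
      calc L * |MvPolynomial.coeff m P * r ^ (w m) / L - (a m : ℝ)| ≤ L * (1 / 2) :=
            mul_le_mul_of_nonneg_left h2 hL.le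
        _ = L / 2 := by ring
    have h4 : ∏ i, |(n i : ℝ)| ^ m i ≤ B ^ D := by
      calc ∏ i, |(n i : ℝ)| ^ m i ≤ ∏ i, B ^ m i := by
            refine Finset.prod_le_prod (fun i _ => by positivity) fun i _ => ?_
            exact pow_le_pow_left₀ (abs_nonneg _) (hni i) _
        _ = B ^ (w m) := Finset.prod_pow_eq_pow_sum _ _ _
        _ ≤ B ^ D := pow_le_pow_right₀ hB1 (hwD m hm)
    exact mul_le_mul h1 h4 (by positivity) (by positivity)
  have hpart2 : |L * ((MvPolynomial.eval n Q : ℤ) : ℝ) - f y| < ε / 2 := by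
    rw [hevalQ, hevalP, ← Finset.sum_sub_distrib]
    have hsum : |∑ m ∈ S, (L * (a m : ℝ) * ∏ i, ((n i : ℝ)) ^ m i -
        (MvPolynomial.coeff m P * r ^ (w m)) * ∏ i, ((n i : ℝ)) ^ m i)|
        ≤ ∑ m ∈ S, (L / 2 * B ^ D) := by
      refine (Finset.abs_sum_le_sum_abs _ _).trans (Finset.sum_le_sum fun m hm => ?_)
      rw [← sub_mul, abs_mul]
      rw [Finset.abs_prod]
      calc |L * (a m : ℝ) - MvPolynomial.coeff m P * r ^ (w m)| * ∏ i, |(n i : ℝ) ^ m i|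
          = |L * (a m : ℝ) - MvPolynomial.coeff m P * r ^ (w m)| * ∏ i, |(n i : ℝ)| ^ m i := by
            exact congrArg _ (Finset.prod_congr rfl fun i _ => abs_pow _ _)
        _ ≤ L / 2 * B ^ D := hterm m hm
    rw [Finset.sum_const, nsmul_eq_mul] at hsum
    have hfinal : c * (L / 2 * B ^ D) < ε / 2 := by
      have hLε : L * (2 * (c + 1) * B ^ D) = ε := by
        rw [hLdef]
        exact div_mul_cancel₀ ε (by positivity)
      nlinarith [mul_pos hBD hL, mul_nonneg hc0 (mul_pos hBD hL).le]
    calc |∑ m ∈ S, (L * (a m : ℝ) * ∏ i, ((n i : ℝ)) ^ m i -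
        (MvPolynomial.coeff m P * r ^ (w m)) * ∏ i, ((n i : ℝ)) ^ m i)| ≤ c * (L / 2 * B ^ D) :=
          hsum
      _ < ε / 2 := hfinal
  have hkey : |L * ((MvPolynomial.eval n Q : ℤ) : ℝ) - MvPolynomial.eval x P| ≤
      |L * ((MvPolynomial.eval n Q : ℤ) : ℝ) - f y| + |f y - f x| := by
    have heq2 : L * ((MvPolynomial.eval n Q : ℤ) : ℝ) - MvPolynomial.eval x P =
        (L * ((MvPolynomial.eval n Q : ℤ) : ℝ) - f y) + (f y - f x) := by
      simp only [hf]
      ring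
    rw [heq2]
    exact abs_add_le _ _
  linarith
end

section
/- Let F ∈ ℝ^{n×n} and let H ∈ ℝ^{1×n} be a nonzero row vector. Then there exist an integer n' with 1 ≤ n' ≤ n and an invertible matrix T ∈ ℝ^{n×n} such that, writing à = T F T⁻¹ and H̃ = H T⁻¹ (indices 1-based), the following hold: (i) for all i ≤ n' and all j, Ã_{ij} = 0 unless j < i or j = n'; (ii) H̃_j = 1 if j = n' and H̃_j = 0 otherwise. In other words, every linear system x(t+1) = F x(t) + G y(t), u(t) = H x(t) can be transformed by a linear change of coordinates [zᵀ, z'ᵀ]ᵀ = T x into the observable canonical form in which z_i(t+1) is a linear function of z₁(t),…,z_{i−1}(t), z_{n'}(t) and y(t), z'(t+1) is a linear function of z(t), z'(t), y(t), and u(t) = z_{n'}(t). -/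
open Matrix Finset Submodule Module


noncomputable def ocf_rvec {n : ℕ} (n' : ℕ) (v : ℕ → (Fin n → ℝ)) (a : ℕ → ℝ) (i : ℕ) :
    Fin n → ℝ :=
  v (n' - 1 - i) - ∑ j ∈ Finset.range (n' - 1 - i), a (i + 1 + j) • v j

lemma ocf_rvec_last {n : ℕ} (n' : ℕ) (v : ℕ → (Fin n → ℝ)) (a : ℕ → ℝ) :
    ocf_rvec n' v a (n' - 1) = v 0 := by
  simp [ocf_rvec, Nat.sub_self]

lemma ocf_sum_vecMul {n : ℕ} (F : Matrix (Fin n) (Fin n) ℝ) (s : Finset ℕ)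
    (f : ℕ → Fin n → ℝ) : (∑ j ∈ s, f j) ᵥ* F = ∑ j ∈ s, (f j ᵥ* F) := by
  simp only [← Matrix.vecMulLinear_apply, map_sum]

lemma ocf_rvec_vecMul {n : ℕ} (F : Matrix (Fin n) (Fin n) ℝ) (v : ℕ → (Fin n → ℝ))
    (hv : ∀ k, v (k + 1) = v k ᵥ* F) (n' : ℕ) (a : ℕ → ℝ) (i : ℕ) :
    ocf_rvec n' v a i ᵥ* F
      = v (n' - 1 - i + 1) - ∑ j ∈ Finset.range (n' - 1 - i), a (i + 1 + j) • v (j + 1) := by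
  unfold ocf_rvec
  rw [Matrix.sub_vecMul, ocf_sum_vecMul, ← hv]
  congr 1
  apply Finset.sum_congr rfl
  intro j _
  rw [Matrix.smul_vecMul, ← hv]

lemma ocf_rvec_rel {n : ℕ} (F : Matrix (Fin n) (Fin n) ℝ) (v : ℕ → (Fin n → ℝ))
    (hv : ∀ k, v (k + 1) = v k ᵥ* F) (n' : ℕ) (a : ℕ → ℝ) (i : ℕ)
    (h0 : 0 < i) (h1 : i < n') :
    ocf_rvec n' v a i ᵥ* F = ocf_rvec n' v a (i - 1) + a i • ocf_rvec n' v a (n' - 1) := by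
  rw [ocf_rvec_vecMul F v hv, ocf_rvec_last]
  have hk : n' - 1 - (i - 1) = (n' - 1 - i) + 1 := by omega
  have hi1 : i - 1 + 1 = i := by omega
  have hrv : ocf_rvec n' v a (i - 1)
      = v (n' - 1 - i + 1) - ∑ j ∈ Finset.range (n' - 1 - i + 1), a (i + j) • v j := by
    unfold ocf_rvec
    rw [hk, hi1]
  rw [hrv, Finset.sum_range_succ']
  have hsum : ∑ j ∈ Finset.range (n' - 1 - i), a (i + (j + 1)) • v (j + 1)
      = ∑ j ∈ Finset.range (n' - 1 - i), a (i + 1 + j) • v (j + 1) := by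
    apply Finset.sum_congr rfl
    intro j _
    have : i + (j + 1) = i + 1 + j := by omega
    rw [this]
  rw [hsum, add_zero]
  abel

lemma ocf_rvec_rel0 {n : ℕ} (F : Matrix (Fin n) (Fin n) ℝ) (v : ℕ → (Fin n → ℝ))
    (hv : ∀ k, v (k + 1) = v k ᵥ* F) (n' : ℕ) (hn' : 1 ≤ n') (a : ℕ → ℝ)
    (hspan : v n' = ∑ j ∈ Finset.range n', a j • v j) :
    ocf_rvec n' v a 0 ᵥ* F = a 0 • ocf_rvec n' v a (n' - 1) := by
  rw [ocf_rvec_vecMul F v hv, ocf_rvec_last]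
  have h1 : n' - 1 - 0 + 1 = n' := by omega
  rw [Nat.sub_zero] at *
  rw [h1, hspan]
  have h2 : n' = (n' - 1) + 1 := by omega
  rw [h2, Finset.sum_range_succ']
  have hsum : ∑ j ∈ Finset.range (n' - 1), a (j + 1) • v (j + 1)
      = ∑ j ∈ Finset.range (n' - 1), a (0 + 1 + j) • v (j + 1) := by
    apply Finset.sum_congr rfl
    intro j _
    have : j + 1 = 0 + 1 + j := by omega
    rw [this]
  rw [hsum]
  simp only [Nat.add_sub_cancel]
  abel


lemma ocf_range_fin_eq_image {α : Type*} (v : ℕ → α) (k : ℕ) :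
    Set.range (fun i : Fin k => v i) = v '' Set.Iio k := by
  ext x
  simp only [Set.mem_range, Set.mem_image, Set.mem_Iio, Fin.exists_iff]
  constructor
  · rintro ⟨m, hm, rfl⟩; exact ⟨m, hm, rfl⟩
  · rintro ⟨m, hm, rfl⟩; exact ⟨m, hm, rfl⟩

lemma ocf_exists_dep (n : ℕ) (v : ℕ → (Fin n → ℝ)) :
    ∃ k ≤ n, v k ∈ Submodule.span ℝ (v '' Set.Iio k) := by
  by_contra hcon
  push_neg at hcon
  have key : ∀ k, k ≤ n + 1 → k ≤ finrank ℝ (Submodule.span ℝ (v '' Set.Iio k)) := by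
    intro k
    induction k with
    | zero => simp
    | succ m ih =>
      intro hm
      have h1 := ih (by omega)
      have hlt : Submodule.span ℝ (v '' Set.Iio m) < Submodule.span ℝ (v '' Set.Iio (m+1)) := by
        rw [SetLike.lt_iff_le_and_exists]
        refine ⟨Submodule.span_mono (Set.image_mono (fun x hx => lt_trans hx (Nat.lt_succ_self m))), v m, ?_, hcon m (by omega)⟩
        exact Submodule.subset_span ⟨m, Nat.lt_succ_self m, rfl⟩
      have := Submodule.finrank_lt_finrank_of_lt hlt
      omega
  have h1 := key (n+1) le_rfl
  have h2 : finrank ℝ (Submodule.span ℝ (v '' Set.Iio (n+1))) ≤ n := by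
    have := Submodule.finrank_le (Submodule.span ℝ (v '' Set.Iio (n+1)))
    simpa [Module.finrank_fin_fun] using this
  omega

lemma ocf_indep_of_not_mem (n : ℕ) (v : ℕ → (Fin n → ℝ)) (m : ℕ)
    (h : ∀ k < m, v k ∉ Submodule.span ℝ (v '' Set.Iio k)) :
    LinearIndependent ℝ (fun i : Fin m => v i) := by
  induction m with
  | zero => exact linearIndependent_empty_type
  | succ m ih =>
    have h1 : LinearIndependent ℝ (fun i : Fin m => v i) := ih (fun k hk => h k (by omega))
    have h2 : v m ∉ Submodule.span ℝ (Set.range (fun i : Fin m => v ↑i)) := by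
      rw [ocf_range_fin_eq_image]; exact h m (Nat.lt_succ_self m)
    have heq : (fun i : Fin (m+1) => v i) = Fin.snoc (fun i : Fin m => v i) (v m) := by
      funext i
      refine Fin.lastCases ?_ ?_ i
      · simp
      · intro j; simp
    rw [heq, linearIndependent_fin_snoc]
    exact ⟨h1, h2⟩

lemma ocf_basis_extend {n m : ℕ} (hm : m ≤ n) (w : Fin m → (Fin n → ℝ))
    (hli : LinearIndependent ℝ w) :
    ∃ B : Basis (Fin n) ℝ (Fin n → ℝ), ∀ (i : Fin n) (h : (i : ℕ) < m), B i = w ⟨i, h⟩ := by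
  set W := Submodule.span ℝ (Set.range w) with hW
  obtain ⟨W', hc⟩ := W.exists_isCompl
  have hrW : finrank ℝ W = m := by
    rw [hW, finrank_span_eq_card hli, Fintype.card_fin]
  have hsum : finrank ℝ W + finrank ℝ W' = n := by
    rw [Submodule.finrank_add_eq_of_isCompl hc, Module.finrank_fin_fun]
  have hW' : finrank ℝ W' = n - m := by omega
  let b1 : Basis (Fin m) ℝ W := Basis.span hli
  let b2 : Basis (Fin (n - m)) ℝ W' := (Module.finBasis ℝ W').reindex (finCongr hW')
  let e : (Fin m ⊕ Fin (n - m)) ≃ Fin n := finSumFinEquiv.trans (finCongr (by omega))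
  refine ⟨((b1.prod b2).map (Submodule.prodEquivOfIsCompl W W' hc)).reindex e, ?_⟩
  intro i h
  have he : e (Sum.inl ⟨i, h⟩) = i := by
    ext; simp [e]
  have hsymm : e.symm i = Sum.inl ⟨i, h⟩ := by
    rw [Equiv.symm_apply_eq, he]
  rw [Basis.reindex_apply, hsymm, Basis.map_apply]
  have hp : (b1.prod b2) (Sum.inl ⟨i, h⟩) = (b1 ⟨i, h⟩, 0) := by
    ext
    · rw [Basis.prod_apply_inl_fst]
    · rw [Basis.prod_apply_inl_snd]
  rw [hp, Submodule.coe_prodEquivOfIsCompl']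
  push_cast [ZeroMemClass.coe_zero, add_zero]
  exact congrArg Subtype.val (Basis.span_apply hli ⟨i, h⟩)


/-- For `F ∈ ℝ^{n×n}` and a nonzero row vector `H ∈ ℝ^{1×n}`,
there exist `1 ≤ n' ≤ n` and an invertible `T` such that `Ã = T F T⁻¹` has
`Ã_{ij} = 0` for all `i ≤ n'` unless `j < i` or `j = n'` (here 0-based:
rows `i < n'`, zero unless `j < i` or `j = n' − 1`), and
`H̃ = H T⁻¹ = e_{n'}ᵀ`. -/
theorem linear_system_observable_canonical_form
    (n : ℕ)
    (F : Matrix (Fin n) (Fin n) ℝ) (H : Matrix (Fin 1) (Fin n) ℝ)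
    (hH : H ≠ 0) :
    ∃ n' : ℕ, 1 ≤ n' ∧ n' ≤ n ∧
      ∃ T : Matrix (Fin n) (Fin n) ℝ, IsUnit T.det ∧
        (∀ i j : Fin n, (i : ℕ) < n' →
          ¬((j : ℕ) < (i : ℕ)) → (j : ℕ) ≠ n' - 1 → (T * F * T⁻¹) i j = 0) ∧
        (∀ j : Fin n, (H * T⁻¹) 0 j = if (j : ℕ) = n' - 1 then 1 else 0) := by
  classical
  set v : ℕ → (Fin n → ℝ) := fun k => (H * F ^ k) 0 with hv_def
  have hv : ∀ k, v (k + 1) = v k ᵥ* F := by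
    intro k
    funext j
    show (H * F ^ (k + 1)) 0 j = _
    rw [pow_succ, ← Matrix.mul_assoc, Matrix.mul_apply]
    simp [hv_def, Matrix.vecMul, Matrix.mul_apply, dotProduct]
  have hv0 : v 0 ≠ 0 := by
    intro h0
    apply hH
    ext i j
    have hi : i = 0 := Subsingleton.elim i 0
    subst hi
    have := congrFun h0 j
    simpa [hv_def] using this
  obtain ⟨k0, hk0n, hk0⟩ := ocf_exists_dep n v
  have hex : ∃ k, v k ∈ Submodule.span ℝ (v '' Set.Iio k) := ⟨k0, hk0⟩
  set n' := Nat.find hex with hn'def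
  have hPn' : v n' ∈ Submodule.span ℝ (v '' Set.Iio n') := Nat.find_spec hex
  have hmin : ∀ k < n', v k ∉ Submodule.span ℝ (v '' Set.Iio k) :=
    fun k hk => Nat.find_min hex hk
  have hn'n : n' ≤ n := le_trans (Nat.find_min' hex hk0) hk0n
  have hn'1 : 1 ≤ n' := by
    rcases Nat.eq_zero_or_pos n' with h | h
    · exfalso
      have himg : v '' Set.Iio 0 = ∅ := by ext x; simp
      rw [h, himg, Submodule.span_empty, Submodule.mem_bot] at hPn'
      exact hv0 hPn'
    · exact h
  -- independence of the v-family
  have hvind : LinearIndependent ℝ (fun i : Fin n' => v i) := ocf_indep_of_not_mem n v n' hmin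
  -- the coefficients a
  have hmem : v n' ∈ Submodule.span ℝ (Set.range (fun i : Fin n' => v ↑i)) := by
    rw [ocf_range_fin_eq_image]; exact hPn'
  obtain ⟨aF, haF⟩ := (mem_span_range_iff_exists_fun ℝ).mp hmem
  set a : ℕ → ℝ := fun m => if h : m < n' then aF ⟨m, h⟩ else 0 with ha_def
  have hspan : v n' = ∑ j ∈ Finset.range n', a j • v j := by
    rw [← haF, ← Fin.sum_univ_eq_sum_range (fun j => a j • v j) n']
    apply Finset.sum_congr rfl
    intro i _
    simp [ha_def, i.isLt]
  set r : ℕ → (Fin n → ℝ) := ocf_rvec n' v a with hr_def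
  -- every v k (k < n') is in the span of the r-family
  have hvr : ∀ k, k < n' → v k ∈ Submodule.span ℝ (Set.range (fun i : Fin n' => r ↑i)) := by
    intro k
    induction k using Nat.strong_induction_on with
    | _ k ih =>
      intro hk
      have hkey : v k = r (n' - 1 - k)
          + ∑ j ∈ Finset.range k, a ((n' - 1 - k) + 1 + j) • v j := by
        rw [hr_def]
        unfold ocf_rvec
        have hc : n' - 1 - (n' - 1 - k) = k := by omega
        rw [hc]
        abel
      rw [hkey]
      apply Submodule.add_mem
      · exact Submodule.subset_span ⟨⟨n' - 1 - k, by omega⟩, rfl⟩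
      · apply Submodule.sum_mem
        intro j hj
        have hjk : j < k := Finset.mem_range.mp hj
        exact Submodule.smul_mem _ _ (ih j hjk (lt_trans hjk hk))
  -- every r i (i < n') is in the span of the v-family
  have hrv : ∀ i, r i ∈ Submodule.span ℝ (Set.range (fun i : Fin n' => v ↑i)) := by
    intro i
    have hvmem : ∀ m, m < n' → v m ∈ Submodule.span ℝ (Set.range (fun i : Fin n' => v ↑i)) :=
      fun m hm => Submodule.subset_span ⟨⟨m, hm⟩, rfl⟩
    rw [hr_def]
    unfold ocf_rvec
    apply Submodule.sub_mem
    · exact hvmem _ (by omega)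
    · apply Submodule.sum_mem
      intro j hj
      have := Finset.mem_range.mp hj
      exact Submodule.smul_mem _ _ (hvmem j (by omega))
  -- span equality and independence of the r-family
  have hspan_eq : Submodule.span ℝ (Set.range (fun i : Fin n' => r ↑i))
      = Submodule.span ℝ (Set.range (fun i : Fin n' => v ↑i)) := by
    apply le_antisymm
    · rw [Submodule.span_le]
      rintro x ⟨i, rfl⟩
      exact hrv i
    · rw [Submodule.span_le]
      rintro x ⟨i, rfl⟩
      exact hvr i i.isLt
  have hrind : LinearIndependent ℝ (fun i : Fin n' => r ↑i) := by
    rw [linearIndependent_iff_card_eq_finrank_span]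
    rw [Fintype.card_fin]
    unfold Set.finrank
    rw [hspan_eq, finrank_span_eq_card hvind, Fintype.card_fin]
  -- extend to a basis and build T
  obtain ⟨B, hB⟩ := ocf_basis_extend hn'n (fun i : Fin n' => r ↑i) hrind
  set T : Matrix (Fin n) (Fin n) ℝ := Matrix.of (fun i j => B i j) with hT_def
  have hTrows : LinearIndependent ℝ (fun i : Fin n => T i) := B.linearIndependent
  have hTu : IsUnit T := linearIndependent_rows_iff_isUnit.mp hTrows
  have hdet : IsUnit T.det := (Matrix.isUnit_iff_isUnit_det T).mp hTu
  have hTT : T * T⁻¹ = 1 := Matrix.mul_nonsing_inv T hdet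
  have hTrow : ∀ (m : ℕ) (h : m < n'), T ⟨m, lt_of_lt_of_le h hn'n⟩ = r m := by
    intro m h
    have := hB ⟨m, lt_of_lt_of_le h hn'n⟩ h
    funext k
    rw [hT_def]
    show B ⟨m, _⟩ k = r m k
    rw [this]
  have key : ∀ (p j : Fin n), (∑ k, T p k * T⁻¹ k j) = if p = j then 1 else 0 := by
    intro p j
    rw [← Matrix.mul_apply, hTT, Matrix.one_apply]
  refine ⟨n', hn'1, hn'n, T, hdet, ?_, ?_⟩
  · intro i j hi hij hjn
    have hTFrow : ∀ k, (T * F) i k = (r i ᵥ* F) k := by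
      intro k
      rw [Matrix.mul_apply]
      have hTi : T i = r i := by
        have : (⟨(i : ℕ), lt_of_lt_of_le hi hn'n⟩ : Fin n) = i := by ext; rfl
        rw [← this]; exact hTrow i hi
      simp [Matrix.vecMul, dotProduct, hTi]
    have hentry : (T * F * T⁻¹) i j = ∑ k, (r i ᵥ* F) k * T⁻¹ k j := by
      rw [Matrix.mul_apply]
      exact Finset.sum_congr rfl fun k _ => by rw [hTFrow k]
    rcases Nat.eq_zero_or_pos (i : ℕ) with hizero | hipos
    · have hrel := ocf_rvec_rel0 F v hv n' hn'1 a hspan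
      rw [hentry]
      have hq : (n' - 1 : ℕ) < n := lt_of_lt_of_le (by omega) hn'n
      have : ∀ k, (r ↑i ᵥ* F) k = a 0 * T ⟨n' - 1, hq⟩ k := by
        intro k
        rw [hizero, hr_def, hrel, hTrow (n' - 1) (by omega), ← hr_def]
        simp
      rw [Finset.sum_congr rfl fun k _ => by rw [this k]]
      have : ∑ k, a 0 * T ⟨n' - 1, hq⟩ k * T⁻¹ k j
          = a 0 * ∑ k, T ⟨n' - 1, hq⟩ k * T⁻¹ k j := by
        rw [Finset.mul_sum]
        exact Finset.sum_congr rfl fun k _ => by ring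
      rw [this, key]
      have : (⟨n' - 1, hq⟩ : Fin n) ≠ j := by
        intro hcon
        apply hjn
        rw [← hcon]
      rw [if_neg this, mul_zero]
    · have hrel := ocf_rvec_rel F v hv n' a i hipos hi
      rw [hentry]
      have hp : ((i : ℕ) - 1) < n := lt_of_lt_of_le (by omega) hn'n
      have hq : (n' - 1 : ℕ) < n := lt_of_lt_of_le (by omega) hn'n
      have hcomb : ∀ k, (r i ᵥ* F) k = T ⟨(i : ℕ) - 1, hp⟩ k + a i * T ⟨n' - 1, hq⟩ k := by
        intro k
        rw [hr_def] at *
        rw [hrel, hTrow ((i : ℕ) - 1) (by omega), hTrow (n' - 1) (by omega)]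
        simp
      rw [Finset.sum_congr rfl fun k _ => by rw [hcomb k]]
      have hdist : ∑ k, (T ⟨(i : ℕ) - 1, hp⟩ k + a i * T ⟨n' - 1, hq⟩ k) * T⁻¹ k j
          = (∑ k, T ⟨(i : ℕ) - 1, hp⟩ k * T⁻¹ k j)
            + a i * ∑ k, T ⟨n' - 1, hq⟩ k * T⁻¹ k j := by
        rw [Finset.mul_sum, ← Finset.sum_add_distrib]
        exact Finset.sum_congr rfl fun k _ => by ring
      rw [hdist, key, key]
      have h1 : (⟨(i : ℕ) - 1, hp⟩ : Fin n) ≠ j := by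
        intro hcon
        apply hij
        have : (j : ℕ) = (i : ℕ) - 1 := by rw [← hcon]
        omega
      have h2 : (⟨n' - 1, hq⟩ : Fin n) ≠ j := by
        intro hcon
        apply hjn
        rw [← hcon]
      rw [if_neg h1, if_neg h2]
      ring
  · intro j
    have hq : (n' - 1 : ℕ) < n := lt_of_lt_of_le (by omega) hn'n
    have hH0 : ∀ k, H 0 k = T ⟨n' - 1, hq⟩ k := by
      intro k
      rw [hTrow (n' - 1) (by omega), hr_def, ocf_rvec_last]
      simp [hv_def]
    rw [Matrix.mul_apply]
    rw [Finset.sum_congr rfl fun k _ => by rw [hH0 k]]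
    rw [key]
    have : ((⟨n' - 1, hq⟩ : Fin n) = j) ↔ ((j : ℕ) = n' - 1) := by
      constructor
      · intro h; rw [← h]
      · intro h; ext; show n' - 1 = (j : ℕ); omega
    simp only [this]
end

section
/- Let F ∈ ℝ^{n×n}, G ∈ ℝ^{n×p}, and H ∈ ℝ^{1×n}. Then there exist scalars a₁,…,a_n ∈ ℝ and row vectors b₁,…,b_n ∈ ℝ^{1×p}, depending only on F, G, H, such that for every pair of sequences x : ℕ → ℝ^n and y : ℕ → ℝ^p satisfying x(t+1) = F x(t) + G y(t) for all t, the output u(t) := H x(t) satisfies u(t) = Σ_{i=1}^{n} aᵢ u(t−i) + Σ_{i=1}^{n} bᵢ y(t−i) for all t ≥ n. That is, the output of any linear state-space system can be represented for all time as a fixed linear function of its previous n outputs and previous n inputs. -/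
open Polynomial Matrix Finset

noncomputable def ARq (a : ℕ → ℝ) : ℕ → Polynomial ℝ
  | 0 => 1
  | (k+1) => ARq a k * X - C (a k)

lemma ARq_eq (a : ℕ → ℝ) (k : ℕ) :
    ARq a k = X ^ k - ∑ i ∈ Finset.range k, C (a i) * X ^ (k - 1 - i) := by
  induction k with
  | zero => simp [ARq]
  | succ k ih =>
      rw [ARq, ih, Finset.sum_range_succ]
      have h1 : ∀ i ∈ Finset.range k,
          C (a i) * X ^ (k - 1 - i) * X = C (a i) * X ^ (k - i) := by
        intro i hi
        rw [Finset.mem_range] at hi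
        have he : k - 1 - i + 1 = k - i := by omega
        rw [mul_assoc, ← pow_succ, he]
      have h2 : ∀ i ∈ Finset.range k,
          C (a i) * X ^ (k + 1 - 1 - i) = C (a i) * X ^ (k - i) := by
        intro i hi; rfl
      rw [sub_mul, Finset.sum_mul, Finset.sum_congr rfl h1, Finset.sum_congr rfl h2]
      have h3 : (k + 1 - 1 - k) = 0 := by omega
      rw [h3]
      ring

lemma ARq_charpoly (n : ℕ) (F : Matrix (Fin n) (Fin n) ℝ) :
    ARq (fun i => -(F.charpoly.coeff (n - 1 - i))) n = F.charpoly := by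
  rw [ARq_eq]
  have hm : F.charpoly.Monic := F.charpoly_monic
  have hd : F.charpoly.natDegree = n := by
    rw [F.charpoly_natDegree_eq_dim, Fintype.card_fin]
  conv_rhs => rw [hm.as_sum, hd]
  rw [← Finset.sum_range_reflect (fun i => C (F.charpoly.coeff i) * X ^ i) n]
  simp [sub_eq_add_neg, map_neg]

/-- For any linear system `x(t+1) = F x(t) + G y(t)`,
`u(t) = H x(t)` with scalar output, there exist coefficients `a₁,…,a_n ∈ ℝ`
and row vectors `b₁,…,b_n ∈ ℝ^{1×p}` (depending only on `F, G, H`) such that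
`u(t) = Σ_{i=1}^n aᵢ u(t−i) + Σ_{i=1}^n bᵢ y(t−i)` for all `t ≥ n`. -/
theorem linear_system_output_autoregressive_representation
    (n p : ℕ)
    (F : Matrix (Fin n) (Fin n) ℝ)
    (G : Matrix (Fin n) (Fin p) ℝ)
    (H : Matrix (Fin 1) (Fin n) ℝ) :
    ∃ (a : Fin n → ℝ) (b : Fin n → Matrix (Fin 1) (Fin p) ℝ),
      ∀ (x : ℕ → Fin n → ℝ) (y : ℕ → Fin p → ℝ),
        (∀ t, x (t + 1) = F.mulVec (x t) + G.mulVec (y t)) →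
        ∀ t, n ≤ t →
          H.mulVec (x t) 0 =
            (∑ i : Fin n, a i * H.mulVec (x (t - 1 - (i : ℕ))) 0) +
            (∑ i : Fin n, (b i).mulVec (y (t - 1 - (i : ℕ))) 0) := by
  classical
  set a : ℕ → ℝ := fun i => -(F.charpoly.coeff (n - 1 - i)) with ha
  set M : ℕ → Matrix (Fin n) (Fin n) ℝ := fun k => aeval F (ARq a k) with hM
  have hM0 : M 0 = 1 := by simp [hM, ARq]
  have hMsucc : ∀ k, M (k+1) = M k * F - a k • 1 := by
    intro k
    simp [hM, ARq, map_sub, _root_.map_mul, aeval_X, aeval_C,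
      Algebra.algebraMap_eq_smul_one]
  have hMn : M n = 0 := by
    simp only [hM, ha]
    rw [ARq_charpoly, Matrix.aeval_self_charpoly]
  refine ⟨fun i => a i, fun i => H * (M i * G), ?_⟩
  intro x y hx t ht
  have key : ∀ k, ∀ t, k ≤ t →
      x t = (M k).mulVec (x (t - k))
        + ∑ i ∈ Finset.range k, a i • x (t - 1 - i)
        + ∑ i ∈ Finset.range k, (M i * G).mulVec (y (t - 1 - i)) := by
    intro k
    induction k with
    | zero => intro t ht; simp [hM0]
    | succ k ih =>
        intro t ht
        have h1 := ih t (by omega)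
        have ht' : t - k = (t - (k+1)) + 1 := by omega
        have ht'' : t - (k + 1) = t - 1 - k := by omega
        rw [ht', hx (t - (k+1))] at h1
        rw [h1, Matrix.mulVec_add, Matrix.mulVec_mulVec, Matrix.mulVec_mulVec]
        have hMF : M k * F = M (k+1) + a k • 1 := by
          rw [hMsucc k]; simp
        rw [hMF, Matrix.add_mulVec, Matrix.smul_mulVec, Matrix.one_mulVec,
          Finset.sum_range_succ, Finset.sum_range_succ, ht'']
        abel
  have hxt : x t = (∑ i ∈ Finset.range n, a i • x (t - 1 - i))
      + ∑ i ∈ Finset.range n, (M i * G).mulVec (y (t - 1 - i)) := by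
    have := key n t ht
    rwa [hMn, Matrix.zero_mulVec, zero_add] at this
  have hsum : ∀ (s : Finset ℕ) (f : ℕ → (Fin n → ℝ)),
      H.mulVec (∑ i ∈ s, f i) = ∑ i ∈ s, H.mulVec (f i) := by
    intro s f
    simp only [← Matrix.mulVecLin_apply, map_sum]
  rw [hxt, Matrix.mulVec_add, hsum, hsum]
  rw [Fin.sum_univ_eq_sum_range (fun i => a i * H.mulVec (x (t - 1 - i)) 0) n,
    Fin.sum_univ_eq_sum_range (fun i => (H * (M i * G)).mulVec (y (t - 1 - i)) 0) n]
  simp [Finset.sum_apply, Matrix.mulVec_smul, Matrix.mulVec_mulVec,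
    Pi.smul_apply, smul_eq_mul]
end
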